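/- arXiv:1506.04598 — 3 statements merged into one kernel-verified Lean document; each statement's English description precedes it below -/
import Mathlib

section
/- Let 𝔄 be an excellent based A-algebra. The A-linear map ψ : 𝔄 → A ⊗_ℤ 𝔄^∞ defined by ψ(b_i) = Σ h_{i,j,i'} ⊗ t_{i'}, the sum over all i' ∈ I and j ∈ I₀ with a(i') = a(j), is a homomorphism of A-algebras carrying the unit of 𝔄 to the unit of A ⊗_ℤ 𝔄^∞. -/
open scoped Classical
open Finset

noncomputable section

/-- The ring `A = ℤ[v,v⁻¹]` of Laurent polynomials over `ℤ`. -/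
abbrev LP : Type := LaurentPolynomial ℤ

/-- The coefficient of `v^n` in a Laurent polynomial. -/
def lcoeff (f : LP) (n : ℤ) : ℤ := (f.coeff : ℤ →₀ ℤ) n

/-- A based `A`-algebra (Lusztig, 1.9), encoded by its structure constants
`h i i' j` (the coefficient of `b j` in `b i * b i'`), the coordinates `e i` of the
unit element, the involution `einv` of the index set (written `i ↦ i^!`), and the
distinguished subset `I0` of `{i | i^! = i}`. -/
structure BasedAlgebra (I : Type) [Fintype I] [DecidableEq I] where
  h : I → I → I → LP
  e : I → LP
  einv : I → I
  I0 : Finset I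
  einv_invol : ∀ i, einv (einv i) = i
  mul_assoc' : ∀ i j k l, ∑ m, h i j m * h m k l = ∑ m, h j k m * h i m l
  one_mul' : ∀ j k, ∑ i, e i * h i j k = if j = k then 1 else 0
  mul_one' : ∀ j k, ∑ i, e i * h j i k = if j = k then 1 else 0
  anti' : ∀ i i' j, h (einv i) (einv i') (einv j) = h i' i j
  I0_fixed : ∀ i ∈ I0, einv i = i

namespace BasedAlgebra

variable {I : Type} [Fintype I] [DecidableEq I]

/-- The preorder `⪯_left` on `I`, generated by: `j ⪯_left i` if `h i' i j ≠ 0` for some `i'`. -/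
def leLeft (B : BasedAlgebra I) : I → I → Prop :=
  Relation.ReflTransGen (fun j i => ∃ i', B.h i' i j ≠ 0)

/-- The preorder `⪯` on `I`, generated by:
`j ⪯ i` if `h i i' j ≠ 0` or `h i' i j ≠ 0` for some `i'`. -/
def leTwo (B : BasedAlgebra I) : I → I → Prop :=
  Relation.ReflTransGen (fun j i => ∃ i', B.h i i' j ≠ 0 ∨ B.h i' i j ≠ 0)

/-- The equivalence relation `∼_left` whose classes are the left cells. -/
def simLeft (B : BasedAlgebra I) (i j : I) : Prop := B.leLeft i j ∧ B.leLeft j i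

/-- The equivalence relation `∼` whose classes are the two-sided cells. -/
def simTwo (B : BasedAlgebra I) (i j : I) : Prop := B.leTwo i j ∧ B.leTwo j i

/-- `c` is a left cell. -/
def IsLeftCell (B : BasedAlgebra I) (c : Set I) : Prop := ∃ i, c = {j | B.simLeft j i}

/-- `c` is a two-sided cell. -/
def IsTwoCell (B : BasedAlgebra I) (c : Set I) : Prop := ∃ i, c = {j | B.simTwo j i}

/-- Lusztig's `a`-function: `a j` is the smallest `m : ℕ` such that
`h i i' j ∈ v^{-m} ℤ[v]` for all `i, i'`. -/
def af (B : BasedAlgebra I) (j : I) : ℕ :=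
  sInf {m : ℕ | ∀ i i' : I, ∀ n : ℤ, n < -(m : ℤ) → lcoeff (B.h i i' j) n = 0}

/-- The leading coefficients: `h i i' (j^!) = (hstar i i' j) v^{-a(j^!)} +` higher powers. -/
def hstar (B : BasedAlgebra I) (i i' j : I) : ℤ :=
  lcoeff (B.h i i' (B.einv j)) (-(B.af (B.einv j) : ℤ))

/-- The based algebra is *excellent* if properties Q1–Q11 of Lusztig (1.9) hold. -/
structure Excellent (B : BasedAlgebra I) : Prop where
  q1 : ∀ j ∈ B.I0, ∀ i i', B.hstar i i' j ≠ 0 → i' = B.einv i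
  q2 : ∀ i, ∃! j, j ∈ B.I0 ∧ B.hstar (B.einv i) i j ≠ 0
  q3 : ∀ i' i, B.leTwo i' i → B.af i ≤ B.af i'
  q4 : ∀ j ∈ B.I0, ∀ i, B.hstar (B.einv i) i j ≠ 0 → B.hstar (B.einv i) i j = 1
  q5 : ∀ i j k, B.hstar i j k = B.hstar j k i
  q6 : ∀ i j k, B.hstar i j k ≠ 0 →
    B.simLeft i (B.einv j) ∧ B.simLeft j (B.einv k) ∧ B.simLeft k (B.einv i)
  q7 : ∀ i' i, B.leLeft i' i → B.af i' = B.af i → B.simLeft i' i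
  q8 : ∀ i' i, B.leTwo i' i → B.af i' = B.af i → B.simTwo i' i
  q9a : ∀ i, ∃! j, j ∈ B.I0 ∧ B.simLeft j i
  q9b : ∀ i j, j ∈ B.I0 → B.simLeft j i → B.hstar (B.einv i) i j = 1
  q10 : ∀ i, B.simTwo i (B.einv i)
  q11 : ∀ i i' j k, B.af j = B.af k → ∀ p q : ℤ,
    ∑ j', lcoeff (B.h k i' j') p * lcoeff (B.h i j' j) q
      = ∑ j', lcoeff (B.h i k j') q * lcoeff (B.h j' i' j) p

/-- The multiplication of the asymptotic ring `𝔄^∞`, on coordinates with respect to the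
basis `{t_i}`: `t_i t_{i'} = ∑_j h*_{i,i',j^!} t_j`. -/
def tmul (B : BasedAlgebra I) (x y : I → ℤ) : I → ℤ :=
  fun j => ∑ i, ∑ i', x i * y i' * B.hstar i i' (B.einv j)

/-- The element `∑_{i ∈ I₀} t_i` of `𝔄^∞`. -/
def tone (B : BasedAlgebra I) : I → ℤ := fun i => if i ∈ B.I0 then 1 else 0

/-- The basis element `t_i` of `𝔄^∞`. -/
def tbasis (B : BasedAlgebra I) (i : I) : I → ℤ := fun j => if j = i then 1 else 0

end BasedAlgebra

namespace BasedAlgebra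

variable {I : Type} [Fintype I] [DecidableEq I]

/-- Multiplication of `𝔄`, on coordinates with respect to the basis `{b_i}`. -/
def amul (B : BasedAlgebra I) (x y : I → LP) : I → LP :=
  fun j => ∑ i, ∑ i', x i * y i' * B.h i i' j

/-- Multiplication of `A ⊗_ℤ 𝔄^∞`, on coordinates with respect to the basis `{1 ⊗ t_i}`. -/
def jmulA (B : BasedAlgebra I) (x y : I → LP) : I → LP :=
  fun j => ∑ i, ∑ i', x i * y i' * ((B.hstar i i' (B.einv j) : ℤ) : LP)

/-- The map `ψ : 𝔄 → A ⊗_ℤ 𝔄^∞`, `ψ(b_i) = ∑_{i' ∈ I, j ∈ I₀, a(i') = a(j)} h_{i,j,i'} t_{i'}`,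
extended `A`-linearly, on coordinates. -/
def psi (B : BasedAlgebra I) (x : I → LP) : I → LP :=
  fun i' => ∑ i, x i * ∑ j ∈ B.I0.filter (fun j => B.af i' = B.af j), B.h i j i'

end BasedAlgebra

/-!
A linear map between algebras given by structure constants is multiplicative as soon as it is
on basis elements, so everything reduces to the `t_u`-coefficient of `ψ(b_i b_k)`. By
associativity and Q3 this coefficient is `∑_{a(w) = a(u)} ψ(b_k)_w h_{i,w,u}`. On the other
side, Q11 moves `h_{i,d,z}` past the leading coefficient of `h_{z,z',u}`; for `d ∈ I₀` the
leading coefficients of `h_{d,z',w}` are determined by Q1, Q5, Q6 and Q9, and the whole sum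
`∑_z ψ(b_i)_z h*_{z,z',u^!}` collapses to `h_{i,z',u}` if `a(z') = a(u)` and to `0` otherwise.
-/

open Matrix

theorem Matrix.vecMul_mul_of_structureConstants {R ι κ : Type*} [CommSemiring R] [Fintype ι]
    [Fintype κ] (m : ι → ι → ι → R) (m' : κ → κ → κ → R) (P : Matrix ι κ R)
    (hP : ∀ a b u, ∑ w, m a b w * P w u = ∑ z, ∑ z', P a z * P b z' * m' z z' u)
    (x y : ι → R) :
    (fun w => ∑ a, ∑ b, x a * y b * m a b w) ᵥ* P =
      fun u => ∑ z, ∑ z', (x ᵥ* P) z * (y ᵥ* P) z' * m' z z' u := by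
  funext u
  calc ∑ w, (∑ a, ∑ b, x a * y b * m a b w) * P w u
      = ∑ a, ∑ b, x a * y b * ∑ w, m a b w * P w u := by
        simp only [Finset.sum_mul, Finset.mul_sum, mul_assoc]
        rw [Finset.sum_comm]
        exact Finset.sum_congr rfl fun _ _ => Finset.sum_comm
    _ = ∑ z, ∑ z', (x ᵥ* P) z * (y ᵥ* P) z' * m' z z' u := by
        simp only [hP, vecMul, dotProduct, Finset.sum_mul, Finset.mul_sum]
        simp_rw [Finset.sum_comm (s := (univ : Finset ι)) (t := (univ : Finset κ))]
        refine Finset.sum_congr rfl fun _ _ => Finset.sum_congr rfl fun _ _ => ?_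
        rw [Finset.sum_comm]
        exact Finset.sum_congr rfl fun _ _ => Finset.sum_congr rfl fun _ _ => by ring

namespace BasedAlgebra

lemma lcoeff_sum {α : Type*} (s : Finset α) (f : α → LP) (n : ℤ) :
    lcoeff (∑ a ∈ s, f a) n = ∑ a ∈ s, lcoeff (f a) n := by
  simp only [lcoeff, AddMonoidAlgebra.coeff_sum, Finsupp.finsetSum_apply]

lemma lcoeff_intCast_mul (c : ℤ) (f : LP) (n : ℤ) :
    lcoeff ((c : LP) * f) n = c * lcoeff f n := by
  rw [← zsmul_eq_mul]
  rfl

lemma lcoeff_mul_intCast (f : LP) (c n : ℤ) : lcoeff (f * (c : LP)) n = lcoeff f n * c := by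
  rw [mul_comm, lcoeff_intCast_mul, mul_comm]

lemma ext_lcoeff {f g : LP} (h : ∀ n, lcoeff f n = lcoeff g n) : f = g :=
  AddMonoidAlgebra.ext (Finsupp.ext h)

lemma exists_lcoeff_eq_zero_of_lt (f : LP) :
    ∃ m : ℕ, ∀ n : ℤ, n < -(m : ℤ) → lcoeff f n = 0 := by
  refine ⟨f.coeff.support.sup Int.natAbs, fun n hn => ?_⟩
  by_contra hne
  have := Finset.le_sup (f := Int.natAbs) (Finsupp.mem_support_iff.mpr hne)
  omega

variable {I : Type} [Fintype I] [DecidableEq I] {B : BasedAlgebra I}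

lemma lcoeff_h_eq_zero_of_lt (i i' : I) {j : I} {n : ℤ} (hn : n < -(B.af j : ℤ)) :
    lcoeff (B.h i i' j) n = 0 := by
  have hne : {m : ℕ | ∀ i i' : I, ∀ n : ℤ, n < -(m : ℤ) →
      lcoeff (B.h i i' j) n = 0}.Nonempty := by
    choose m hm using fun p : I × I => exists_lcoeff_eq_zero_of_lt (B.h p.1 p.2 j)
    refine ⟨univ.sup m, fun a b n hn => hm (a, b) n (hn.trans_le ?_)⟩
    have := Finset.le_sup (f := m) (mem_univ (a, b))
    omega
  exact Nat.sInf_mem hne i i' n hn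

lemma hstar_einv (z z' u : I) :
    B.hstar z z' (B.einv u) = lcoeff (B.h z z' u) (-(B.af u : ℤ)) := by
  rw [hstar, B.einv_invol]

/-- The coefficient of `t_u` in `ψ(b_i)`. -/
def psiMatrix (B : BasedAlgebra I) : Matrix I I LP :=
  fun i u => ∑ d ∈ B.I0.filter (fun d => B.af u = B.af d), B.h i d u

lemma psi_e : B.psi B.e = fun u => if u ∈ B.I0 then (1 : LP) else 0 := by
  funext u
  calc ∑ i, B.e i * ∑ d ∈ B.I0.filter (fun d => B.af u = B.af d), B.h i d u
      = ∑ d ∈ B.I0.filter (fun d => B.af u = B.af d), ∑ i, B.e i * B.h i d u := by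
        simp only [Finset.mul_sum]
        exact Finset.sum_comm
    _ = ∑ d ∈ B.I0.filter (fun d => B.af u = B.af d), if d = u then (1 : LP) else 0 :=
        Finset.sum_congr rfl fun d _ => B.one_mul' d u
    _ = if u ∈ B.I0 then (1 : LP) else 0 := by
        simp only [Finset.sum_ite_eq', Finset.mem_filter, and_true]

lemma leTwo_of_leLeft {a b : I} (h : B.leLeft a b) : B.leTwo a b :=
  Relation.ReflTransGen.mono (fun _ _ ⟨i', hi'⟩ => ⟨i', Or.inr hi'⟩) _ _ h

namespace Excellent

variable (hB : B.Excellent)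
include hB

lemma af_le_af_of_h_ne_zero_right {a b c : I} (h : B.h a b c ≠ 0) : B.af b ≤ B.af c :=
  hB.q3 c b (.single ⟨a, .inr h⟩)

lemma af_eq_of_simLeft {a b : I} (h : B.simLeft a b) : B.af a = B.af b :=
  le_antisymm (hB.q3 b a (leTwo_of_leLeft h.2)) (hB.q3 a b (leTwo_of_leLeft h.1))

lemma af_einv (i : I) : B.af (B.einv i) = B.af i :=
  le_antisymm (hB.q3 i (B.einv i) (hB.q10 i).1) (hB.q3 (B.einv i) i (hB.q10 i).2)

lemma af_eq_of_hstar_ne_zero {z z' u : I} (h : B.hstar z z' (B.einv u) ≠ 0) :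
    B.af z = B.af u := by
  have := hB.af_eq_of_simLeft (hB.q6 z z' (B.einv u) h).2.2
  rwa [hB.af_einv, hB.af_einv, eq_comm] at this

lemma hstar_of_mem_I0 {d : I} (hd : d ∈ B.I0) (z' w : I) :
    B.hstar d z' (B.einv w) = if z' = w ∧ B.simLeft d (B.einv w) then 1 else 0 := by
  split_ifs with hc
  · obtain ⟨rfl, hsim⟩ := hc
    rw [hB.q5]
    simpa only [B.einv_invol] using hB.q9b (B.einv z') d hd hsim
  · by_contra hne
    have hz' : B.einv w = B.einv z' := hB.q1 d hd z' (B.einv w) (by rwa [← hB.q5])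
    obtain ⟨-, -, hsim⟩ := hB.q6 d z' (B.einv w) hne
    rw [B.I0_fixed d hd] at hsim
    refine hc ⟨?_, hsim.symm⟩
    simpa only [B.einv_invol] using (congrArg B.einv hz').symm

lemma lcoeff_h_of_mem_I0 {d : I} (hd : d ∈ B.I0) (z' : I) {w u : I} (hwu : B.af w ≤ B.af u) :
    lcoeff (B.h d z' w) (-(B.af u : ℤ)) =
      if B.af w = B.af u ∧ z' = w ∧ B.simLeft d (B.einv w) then 1 else 0 := by
  rcases hwu.lt_or_eq with hlt | heq
  · rw [if_neg fun h => hlt.ne h.1]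
    exact lcoeff_h_eq_zero_of_lt d z' (by omega)
  · rw [← heq, ← hstar_einv, hB.hstar_of_mem_I0 hd]
    simp only [true_and]

lemma h_mul_h_eq_zero_of_af_ne {k d w i u : I} (hdu : B.af u = B.af d) (hwu : B.af w ≠ B.af u) :
    B.h k d w * B.h i w u = 0 := by
  by_contra hne
  obtain ⟨h₁, h₂⟩ := mul_ne_zero_iff.mp hne
  exact hwu (le_antisymm (hB.af_le_af_of_h_ne_zero_right h₂)
    (hdu.trans_le (hB.af_le_af_of_h_ne_zero_right h₁)))

lemma sum_ite_simLeft_einv {w u : I} (hwu : B.af w = B.af u) (X : LP) :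
    ∑ d ∈ B.I0.filter (fun d => B.af u = B.af d), (if B.simLeft d (B.einv w) then X else 0) =
      X := by
  obtain ⟨d₀, ⟨hd₀, hsim₀⟩, huniq⟩ := hB.q9a (B.einv w)
  have had₀ : B.af u = B.af d₀ := by rw [hB.af_eq_of_simLeft hsim₀, hB.af_einv, hwu]
  rw [Finset.sum_eq_single_of_mem d₀ (Finset.mem_filter.mpr ⟨hd₀, had₀⟩) fun d hd hne =>
    if_neg fun hsim => hne (huniq d ⟨(Finset.mem_filter.mp hd).1, hsim⟩), if_pos hsim₀]

lemma sum_h_mul_lcoeff_h {i d u : I} (hdu : B.af u = B.af d) (z' : I) (p : ℤ) :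
    ∑ z, B.h i d z * (lcoeff (B.h z z' u) p : LP) =
      ∑ w, (lcoeff (B.h d z' w) p : LP) * B.h i w u :=
  ext_lcoeff fun q => by
    simp only [lcoeff_sum, lcoeff_mul_intCast, lcoeff_intCast_mul]
    exact (hB.q11 i z' u d hdu p q).symm

lemma sum_h_mul_psiMatrix (i k u : I) :
    ∑ w, B.h i k w * B.psiMatrix w u =
      ∑ w, if B.af w = B.af u then B.psiMatrix k w * B.h i w u else 0 := by
  calc ∑ w, B.h i k w * B.psiMatrix w u
      = ∑ d ∈ B.I0.filter (fun d => B.af u = B.af d), ∑ w, B.h k d w * B.h i w u := by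
        simp only [psiMatrix, Finset.mul_sum]
        rw [Finset.sum_comm]
        exact Finset.sum_congr rfl fun d _ => B.mul_assoc' i k d u
    _ = ∑ d ∈ B.I0.filter (fun d => B.af u = B.af d), ∑ w,
          if B.af w = B.af u then B.h k d w * B.h i w u else 0 :=
        Finset.sum_congr rfl fun d hd => Finset.sum_congr rfl fun w _ => by
          split_ifs with hwu
          · rfl
          · exact hB.h_mul_h_eq_zero_of_af_ne (Finset.mem_filter.mp hd).2 hwu
    _ = ∑ w, if B.af w = B.af u then B.psiMatrix k w * B.h i w u else 0 := by
        rw [Finset.sum_comm]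
        refine Finset.sum_congr rfl fun w _ => ?_
        split_ifs with hwu
        · simp only [psiMatrix, hwu, Finset.sum_mul]
        · exact Finset.sum_const_zero

lemma sum_psiMatrix_mul_hstar (i z' u : I) :
    ∑ z, B.psiMatrix i z * (B.hstar z z' (B.einv u) : LP) =
      if B.af z' = B.af u then B.h i z' u else 0 := by
  calc ∑ z, B.psiMatrix i z * (B.hstar z z' (B.einv u) : LP)
      = ∑ z, ∑ d ∈ B.I0.filter (fun d => B.af u = B.af d),
          B.h i d z * (lcoeff (B.h z z' u) (-(B.af u : ℤ)) : LP) :=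
        Finset.sum_congr rfl fun z _ => by
          by_cases hc : B.hstar z z' (B.einv u) = 0
          · rw [hc, ← hstar_einv, hc]
            simp only [Int.cast_zero, mul_zero, Finset.sum_const_zero]
          · simp only [psiMatrix, hB.af_eq_of_hstar_ne_zero hc, Finset.sum_mul, hstar_einv]
    _ = ∑ d ∈ B.I0.filter (fun d => B.af u = B.af d), ∑ w,
          (lcoeff (B.h d z' w) (-(B.af u : ℤ)) : LP) * B.h i w u := by
        rw [Finset.sum_comm]
        exact Finset.sum_congr rfl fun d hd =>
          hB.sum_h_mul_lcoeff_h (Finset.mem_filter.mp hd).2 z' _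
    _ = ∑ d ∈ B.I0.filter (fun d => B.af u = B.af d), ∑ w,
          if B.af w = B.af u ∧ z' = w ∧ B.simLeft d (B.einv w) then B.h i w u else 0 :=
        Finset.sum_congr rfl fun d hd => Finset.sum_congr rfl fun w _ => by
          by_cases hiwu : B.h i w u = 0
          · simp [hiwu]
          · rw [hB.lcoeff_h_of_mem_I0 (Finset.mem_filter.mp hd).1 z'
              (hB.af_le_af_of_h_ne_zero_right hiwu)]
            split_ifs <;> simp
    _ = ∑ d ∈ B.I0.filter (fun d => B.af u = B.af d),
          if B.af z' = B.af u ∧ B.simLeft d (B.einv z') then B.h i z' u else 0 :=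
        Finset.sum_congr rfl fun d _ => by
          rw [Finset.sum_eq_single_of_mem z' (mem_univ z') fun w _ hw =>
            if_neg fun h => hw h.2.1.symm]
          simp only [true_and]
    _ = if B.af z' = B.af u then B.h i z' u else 0 := by
        split_ifs with hz'u
        · simp only [hz'u, true_and]
          exact hB.sum_ite_simLeft_einv hz'u _
        · simp only [hz'u, false_and, if_false, Finset.sum_const_zero]

lemma sum_h_mul_psiMatrix_eq_sum_psiMatrix_mul (a b u : I) :
    ∑ w, B.h a b w * B.psiMatrix w u =
      ∑ z, ∑ z', B.psiMatrix a z * B.psiMatrix b z' * (B.hstar z z' (B.einv u) : LP) := by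
  rw [hB.sum_h_mul_psiMatrix, Finset.sum_comm]
  refine Finset.sum_congr rfl fun z' _ => ?_
  calc (if B.af z' = B.af u then B.psiMatrix b z' * B.h a z' u else 0)
      = B.psiMatrix b z' * ∑ z, B.psiMatrix a z * (B.hstar z z' (B.einv u) : LP) := by
        rw [hB.sum_psiMatrix_mul_hstar, mul_ite, mul_zero]
    _ = ∑ z, B.psiMatrix a z * B.psiMatrix b z' * (B.hstar z z' (B.einv u) : LP) := by
        rw [Finset.mul_sum]
        exact Finset.sum_congr rfl fun z _ => by ring

end Excellent

end BasedAlgebra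

/-- Lusztig 1.9. For an excellent based `A`-algebra, the `A`-linear map
`ψ : 𝔄 → A ⊗_ℤ 𝔄^∞` with `ψ(b_i) = ∑_{i' ∈ I, j ∈ I₀; a(i')=a(j)} h_{i,j,i'} t_{i'}` is a
homomorphism of `A`-algebras carrying the unit of `𝔄` to the unit of `A ⊗_ℤ 𝔄^∞`. -/
theorem statement3 {I : Type} [Fintype I] [DecidableEq I]
    (B : BasedAlgebra I) (hB : B.Excellent) :
    (∀ (a : LP) (x y : I → LP),
      B.psi (fun i => a * x i + y i) = fun i => a * B.psi x i + B.psi y i) ∧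
    (∀ x y : I → LP, B.psi (B.amul x y) = B.jmulA (B.psi x) (B.psi y)) ∧
    (B.psi B.e = fun i => if i ∈ B.I0 then (1 : LP) else 0) := by
  refine ⟨fun a x y => ?_, fun x y => ?_, ?_⟩
  · funext u
    simp only [BasedAlgebra.psi, add_mul, Finset.sum_add_distrib, Finset.mul_sum, mul_assoc]
  · exact vecMul_mul_of_structureConstants B.h (fun z z' u => (B.hstar z z' (B.einv u) : LP))
      B.psiMatrix hB.sum_h_mul_psiMatrix_eq_sum_psiMatrix_mul x y
  · exact BasedAlgebra.psi_e
end
end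

section
/- Let 𝔄 be an excellent based A-algebra and let τ : 𝔄^∞ → ℤ be the additive group homomorphism with τ(t_i) = 1 for i ∈ I₀ and τ(t_i) = 0 for i ∈ I − I₀. Then for all i, j ∈ I one has τ(t_i t_j) = 1 if j = i^! and τ(t_i t_j) = 0 if j ≠ i^!. In particular τ(xy) = τ(yx) for all x, y ∈ 𝔄^∞. -/
open scoped Classical
open Finset

noncomputable section

/-- The homomorphism `τ : 𝔄^∞ → ℤ` with `τ(t_i) = 1` for `i ∈ I₀` and `τ(t_i) = 0`
otherwise, on coordinates. -/
def BasedAlgebra.ttau {I : Type} [Fintype I] [DecidableEq I]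
    (B : BasedAlgebra I) (x : I → ℤ) : ℤ := ∑ i ∈ B.I0, x i

/-! Since `I₀` is pointwise fixed by `!`, `τ(t_i t_{i'}) = ∑_{k ∈ I₀} h*_{i,i',k}`. By Q1 every
term vanishes unless `i' = i^!`; for `i' = i^!`, Q6 forces a nonzero term to come from the
element of `I₀` in the left cell of `i^!`, and by Q9 that term is `1`. Hence
`τ(xy) = ∑_i x_i y_{i^!}`, which is symmetric in `x` and `y` after reindexing by `i ↦ i^!`. -/

theorem Function.Involutive.sum_mul_comp_comm {ι R : Type} [Fintype ι] [CommSemiring R]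
    {σ : ι → ι} (hσ : Function.Involutive σ) (f g : ι → R) :
    ∑ i, f i * g (σ i) = ∑ i, g i * f (σ i) := by
  rw [← Equiv.sum_comp hσ.toPerm]
  simp only [Function.Involutive.coe_toPerm, hσ _, mul_comm]

namespace BasedAlgebra

variable {I : Type} [Fintype I] [DecidableEq I] {B : BasedAlgebra I}

theorem einv_involutive (B : BasedAlgebra I) : Function.Involutive B.einv := B.einv_invol

theorem Excellent.sum_hstar_I0 (hB : B.Excellent) (i i' : I) :
    ∑ k ∈ B.I0, B.hstar i i' k = if i' = B.einv i then 1 else 0 := by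
  split_ifs with hi'
  · subst hi'
    obtain ⟨j, ⟨hj, hji⟩, hj_unique⟩ := hB.q9a (B.einv i)
    rw [Finset.sum_eq_single_of_mem j hj]
    · simpa only [B.einv_invol] using hB.q9b (B.einv i) j hj hji
    · intro k hk hkj
      by_contra hne
      exact hkj (hj_unique k ⟨hk, (hB.q6 i (B.einv i) k hne).2.2⟩)
  · exact Finset.sum_eq_zero fun k hk => not_imp_comm.mp (hB.q1 k hk i i') hi'

theorem Excellent.ttau_tmul (hB : B.Excellent) (x y : I → ℤ) :
    B.ttau (B.tmul x y) = ∑ i, x i * y (B.einv i) := by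
  calc B.ttau (B.tmul x y)
      = ∑ k ∈ B.I0, ∑ i, ∑ i', x i * y i' * B.hstar i i' k :=
        Finset.sum_congr rfl fun k hk => by rw [tmul, B.I0_fixed k hk]
    _ = ∑ i, ∑ i', x i * y i' * ∑ k ∈ B.I0, B.hstar i i' k := by
        simp only [Finset.mul_sum]
        rw [Finset.sum_comm]
        exact Finset.sum_congr rfl fun i _ => Finset.sum_comm
    _ = ∑ i, x i * y (B.einv i) := by simp [hB.sum_hstar_I0]

end BasedAlgebra

/-- Lusztig 1.9(a). For an excellent based `A`-algebra, `τ(t_i t_j) = 1`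
if `j = i^!` and `τ(t_i t_j) = 0` otherwise; in particular `τ(xy) = τ(yx)` for all
`x, y ∈ 𝔄^∞`. -/
theorem statement4 {I : Type} [Fintype I] [DecidableEq I]
    (B : BasedAlgebra I) (hB : B.Excellent) :
    (∀ i j : I, B.ttau (B.tmul (B.tbasis i) (B.tbasis j)) =
      if j = B.einv i then 1 else 0) ∧
    (∀ x y : I → ℤ, B.ttau (B.tmul x y) = B.ttau (B.tmul y x)) := by
  refine ⟨fun i j => ?_, fun x y => ?_⟩
  · rw [hB.ttau_tmul, Fintype.sum_eq_single i fun k hk => by simp [BasedAlgebra.tbasis, hk]]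
    simp [BasedAlgebra.tbasis, eq_comm]
  · rw [hB.ttau_tmul, hB.ttau_tmul, B.einv_involutive.sum_mul_comp_comm]
end
end

section
/- Let 𝔄 be an excellent based A-algebra, 𝐜 a two-sided cell of I, and a the common value of the a-function on 𝐜. Let r ≥ 1 and (i_1, …, i_r) ∈ I^r, and write b_{i_1} ⋯ b_{i_r} = Σ_{i∈I, k∈ℤ} N(i,k) v^k b_i. Assume that i_u ∈ 𝐜 for some u ∈ {1,…,r} and that i ∈ I, k ∈ ℤ satisfy N(i,k) ≠ 0. Then either i ∈ 𝐜 and k ≥ −(r−1)a, or i ≺ 𝐜 (that is, i ⪯ i' for some i' ∈ 𝐜 and i ∉ 𝐜). -/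
open scoped Classical
open Finset

noncomputable section

namespace BasedAlgebra

variable {I : Type} [Fintype I] [DecidableEq I]

/-- The coordinates of the basis element `b_i` of `𝔄`. -/
def bvec (_B : BasedAlgebra I) (i : I) : I → LP := fun j => if j = i then 1 else 0

/-- The product `b_{f 0} b_{f 1} ⋯ b_{f (n-1)}` in `𝔄`, on coordinates. -/
def aprod (B : BasedAlgebra I) (f : ℕ → I) : ℕ → (I → LP)
  | 0 => B.e
  | n + 1 => B.amul (B.aprod f n) (B.bvec (f n))

end BasedAlgebra


/-!
Multiplying `b_{i_1} ⋯ b_{i_s}` on the right by `b_{i_{s+1}}` only produces basis elements `b_i`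
with `i ⪯ j` for some `b_j` already present, and only through the structure constants
`h_{j,i_{s+1},i} ∈ v^{-a(i)} ℤ[v]`. By Q3, `a(j) ≤ a(i)`, so induction on `r` shows that the
coefficient of `b_i` in a product of `r` basis elements lies in `v^{-(r-1)a(i)} ℤ[v]`, and that
such an `i` satisfies `i ⪯ i_u` for every factor `i_u`. If `i ∈ 𝐜` then `a(i) = a`; otherwise
`i ⪯ i_u ∈ 𝐜` says `i ≺ 𝐜`.
-/

lemma lcoeff_sum {α : Type*} (s : Finset α) (f : α → LP) (n : ℤ) :
    lcoeff (∑ a ∈ s, f a) n = ∑ a ∈ s, lcoeff (f a) n := by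
  simp only [lcoeff, AddMonoidAlgebra.coeff_sum, Finsupp.finsetSum_apply]

lemma exists_lcoeff_ne_zero_of_lcoeff_mul_ne_zero {p q : LP} {n : ℤ}
    (h : lcoeff (p * q) n ≠ 0) :
    ∃ n₁ n₂, lcoeff p n₁ ≠ 0 ∧ lcoeff q n₂ ≠ 0 ∧ n₁ + n₂ = n := by
  obtain ⟨n₁, h₁, n₂, h₂, rfl⟩ :=
    Finset.mem_add.1 (AddMonoidAlgebra.support_coeff_mul_subset p q (Finsupp.mem_support_iff.2 h))
  exact ⟨n₁, n₂, Finsupp.mem_support_iff.1 h₁, Finsupp.mem_support_iff.1 h₂, rfl⟩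

lemma eq_zero_of_lcoeff_one_ne_zero {n : ℤ} (h : lcoeff 1 n ≠ 0) : n = 0 :=
  Finset.mem_zero.1 (AddMonoidAlgebra.support_coeff_one_subset (Finsupp.mem_support_iff.2 h))

lemma ne_zero_of_lcoeff_ne_zero {p : LP} {n : ℤ} (h : lcoeff p n ≠ 0) : p ≠ 0 := by
  rintro rfl
  exact h rfl

lemma exists_lcoeff_eq_zero_of_lt (p : LP) :
    ∃ m : ℕ, ∀ n : ℤ, n < -(m : ℤ) → lcoeff p n = 0 := by
  refine ⟨p.coeff.support.sup Int.natAbs, fun n hn => ?_⟩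
  by_contra h
  have hle : n.natAbs ≤ p.coeff.support.sup Int.natAbs :=
    Finset.le_sup (Finsupp.mem_support_iff.2 h)
  omega

lemma exists_forall_lcoeff_eq_zero_of_lt {ι : Type*} [Finite ι] (p : ι → LP) :
    ∃ m : ℕ, ∀ x n, n < -(m : ℤ) → lcoeff (p x) n = 0 := by
  choose m hm using fun x => exists_lcoeff_eq_zero_of_lt (p x)
  obtain ⟨M, hM⟩ := Finite.bddAbove_range m
  refine ⟨M, fun x n hn => hm x n ?_⟩
  have : m x ≤ M := hM ⟨x, rfl⟩
  omega

namespace BasedAlgebra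

variable {I : Type} [Fintype I] [DecidableEq I] (B : BasedAlgebra I)

lemma neg_af_le_of_lcoeff_h_ne_zero {i i' j : I} {n : ℤ} (h : lcoeff (B.h i i' j) n ≠ 0) :
    -(B.af j : ℤ) ≤ n := by
  obtain ⟨m, hm⟩ := exists_forall_lcoeff_eq_zero_of_lt fun p : I × I => B.h p.1 p.2 j
  have hspec :
      B.af j ∈ {m : ℕ | ∀ i i' : I, ∀ n : ℤ, n < -(m : ℤ) → lcoeff (B.h i i' j) n = 0} :=
    Nat.sInf_mem ⟨m, fun i i' => hm (i, i')⟩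
  by_contra hlt
  exact h (hspec i i' n (not_le.1 hlt))

lemma leTwo_of_h_ne_zero_left {i i' j : I} (h : B.h i i' j ≠ 0) : B.leTwo j i :=
  .single ⟨i', .inl h⟩

lemma leTwo_of_h_ne_zero_right {i i' j : I} (h : B.h i i' j ≠ 0) : B.leTwo j i' :=
  .single ⟨i, .inr h⟩

lemma amul_bvec_apply (x : I → LP) (i' j : I) :
    B.amul x (B.bvec i') j = ∑ i, x i * B.h i i' j := by
  simp [amul, bvec]

lemma aprod_succ_apply (f : ℕ → I) (n : ℕ) (j : I) :
    B.aprod f (n + 1) j = ∑ i, B.aprod f n i * B.h i (f n) j :=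
  B.amul_bvec_apply _ _ _

lemma aprod_one_apply (f : ℕ → I) (j : I) : B.aprod f 1 j = if f 0 = j then 1 else 0 :=
  (B.aprod_succ_apply f 0 j).trans (B.one_mul' (f 0) j)

variable {B}

lemma exists_of_lcoeff_aprod_succ_ne_zero {f : ℕ → I} {n : ℕ} {j : I} {k : ℤ}
    (h : lcoeff (B.aprod f (n + 1) j) k ≠ 0) :
    ∃ i k₁ k₂,
      lcoeff (B.aprod f n i) k₁ ≠ 0 ∧ lcoeff (B.h i (f n) j) k₂ ≠ 0 ∧ k₁ + k₂ = k := by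
  rw [aprod_succ_apply, lcoeff_sum] at h
  obtain ⟨i, -, hi⟩ := Finset.exists_ne_zero_of_sum_ne_zero h
  obtain ⟨k₁, k₂, h₁, h₂, hk⟩ := exists_lcoeff_ne_zero_of_lcoeff_mul_ne_zero hi
  exact ⟨i, k₁, k₂, h₁, h₂, hk⟩

lemma leTwo_of_lcoeff_aprod_ne_zero {f : ℕ → I} {n : ℕ} {j : I} {k : ℤ}
    (h : lcoeff (B.aprod f n j) k ≠ 0) : ∀ u < n, B.leTwo j (f u) := by
  induction n generalizing j k with
  | zero => exact fun u hu => absurd hu u.not_lt_zero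
  | succ n ih =>
    obtain ⟨i, _, _, h₁, h₂, -⟩ := exists_of_lcoeff_aprod_succ_ne_zero h
    have hh := ne_zero_of_lcoeff_ne_zero h₂
    intro u hu
    rcases Nat.lt_succ_iff_lt_or_eq.1 hu with hu | rfl
    · exact (B.leTwo_of_h_ne_zero_left hh).trans (ih h₁ u hu)
    · exact B.leTwo_of_h_ne_zero_right hh

lemma neg_mul_af_le_of_lcoeff_aprod_ne_zero
    (hq3 : ∀ i' i, B.leTwo i' i → B.af i ≤ B.af i')
    {f : ℕ → I} {n : ℕ} {j : I} {k : ℤ} (h : lcoeff (B.aprod f (n + 1) j) k ≠ 0) :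
    -((n : ℤ) * B.af j) ≤ k := by
  induction n generalizing j k with
  | zero =>
    rw [aprod_one_apply] at h
    split_ifs at h
    · simp [eq_zero_of_lcoeff_one_ne_zero h]
    · exact absurd rfl h
  | succ n ih =>
    obtain ⟨i, k₁, k₂, h₁, h₂, rfl⟩ := exists_of_lcoeff_aprod_succ_ne_zero h
    have hk₁ : -((n : ℤ) * B.af i) ≤ k₁ := ih h₁
    have hk₂ : -(B.af j : ℤ) ≤ k₂ := B.neg_af_le_of_lcoeff_h_ne_zero h₂
    have ha : (B.af i : ℤ) ≤ B.af j :=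
      Int.ofNat_le.2 (hq3 j i (B.leTwo_of_h_ne_zero_left (ne_zero_of_lcoeff_ne_zero h₂)))
    have hmul : (n : ℤ) * B.af i ≤ n * B.af j := mul_le_mul_of_nonneg_left ha n.cast_nonneg
    push_cast
    linarith

end BasedAlgebra

theorem statement8_general {I : Type} [Fintype I] [DecidableEq I]
    (B : BasedAlgebra I) (hB : B.Excellent)
    (c : Set I) (a0 : ℕ) (ha0 : ∀ i ∈ c, B.af i = a0)
    (r0 : ℕ) (f : ℕ → I) (hf : ∃ u ≤ r0, f u ∈ c) :
    ∀ (i : I) (k : ℤ), lcoeff (B.aprod f (r0 + 1) i) k ≠ 0 →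
      (i ∈ c ∧ -((r0 : ℤ) * (a0 : ℤ)) ≤ k) ∨ ((∃ i' ∈ c, B.leTwo i i') ∧ i ∉ c) := by
  intro i k hk
  obtain ⟨u, hu, hfu⟩ := hf
  by_cases hi : i ∈ c
  · have hbound := BasedAlgebra.neg_mul_af_le_of_lcoeff_aprod_ne_zero hB.q3 hk
    rw [ha0 i hi] at hbound
    exact .inl ⟨hi, hbound⟩
  · have hle := BasedAlgebra.leTwo_of_lcoeff_aprod_ne_zero hk u (Nat.lt_succ_of_le hu)
    exact .inr ⟨⟨f u, hfu, hle⟩, hi⟩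

/-- Lusztig 1.10(e). Let `𝐜` be a two-sided cell of an excellent based
`A`-algebra with `a`-function constant equal to `a₀` on `𝐜`, and write
`b_{i_1} ⋯ b_{i_r} = ∑_{i,k} N(i,k) v^k b_i` (here `r = r₀ + 1 ≥ 1`, `i_u = f (u-1)`).
Assume `i_u ∈ 𝐜` for some `u`, and `N(i,k) ≠ 0`. Then either `i ∈ 𝐜` and
`k ≥ -(r-1)a₀`, or `i ≺ 𝐜`, i.e. `i ⪯ i'` for some `i' ∈ 𝐜` and `i ∉ 𝐜`. -/
theorem statement8 {I : Type} [Fintype I] [DecidableEq I]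
    (B : BasedAlgebra I) (hB : B.Excellent)
    (c : Set I) (hc : B.IsTwoCell c) (a0 : ℕ) (ha0 : ∀ i ∈ c, B.af i = a0)
    (r0 : ℕ) (f : ℕ → I) (hf : ∃ u ≤ r0, f u ∈ c) :
    ∀ (i : I) (k : ℤ), lcoeff (B.aprod f (r0 + 1) i) k ≠ 0 →
      (i ∈ c ∧ -((r0 : ℤ) * (a0 : ℤ)) ≤ k) ∨ ((∃ i' ∈ c, B.leTwo i i') ∧ i ∉ c) :=
  statement8_general B hB c a0 ha0 r0 f hf
end
end
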